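/- arXiv:2505.07742 — 5 statements merged into one kernel-verified Lean document; each statement's English description precedes it below -/
import Mathlib

section
/- Let σ be a torsion theory on left R-modules. Then: (i) every quotient of a σ-cotorsion-free module is σ-cotorsion-free; (ii) if K is a submodule of M such that both K and M/K are σ-cotorsion-free, then M is σ-cotorsion-free; (iii) if f : M → N is a surjective R-linear map whose kernel is superfluous in M (i.e. ker f + L = M implies L = M for every submodule L of M) and N is σ-cotorsion-free, then M is σ-cotorsion-free; (iv) if σ is hereditary, then every direct sum of σ-cotorsion-free modules is σ-cotorsion-free. -/
universe u

open DirectSum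

/-- A torsion theory on the category of left `R`-modules: a pair of classes of modules each of
which is the `Hom`-orthogonal of the other. -/
structure TorsionTheory (R : Type u) [Ring R] where
  torsion : ModuleCat.{u} R → Prop
  torsionFree : ModuleCat.{u} R → Prop
  mem_torsion : ∀ T : ModuleCat.{u} R,
    torsion T ↔ ∀ F : ModuleCat.{u} R, torsionFree F → ∀ f : ↥T →ₗ[R] ↥F, f = 0
  mem_torsionFree : ∀ F : ModuleCat.{u} R,
    torsionFree F ↔ ∀ T : ModuleCat.{u} R, torsion T → ∀ f : ↥T →ₗ[R] ↥F, f = 0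

variable {R : Type u} [Ring R]

/-- A submodule `K` of `M` is `σ`-dense if `M/K` is `σ`-torsion. -/
def TorsionTheory.IsDense (σ : TorsionTheory R) {M : Type u} [AddCommGroup M] [Module R M]
    (K : Submodule R M) : Prop :=
  σ.torsion (ModuleCat.of R (M ⧸ K))

/-- A module `M` is `σ`-cotorsion-free if its only `σ`-dense submodule is `M` itself. -/
def TorsionTheory.CotorsionFree (σ : TorsionTheory R) (M : Type u) [AddCommGroup M]
    [Module R M] : Prop :=
  ∀ K : Submodule R M, σ.IsDense K → K = ⊤

/-- A torsion theory is hereditary if its torsion class is closed under submodules. -/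
def TorsionTheory.IsHereditary (σ : TorsionTheory R) : Prop :=
  ∀ T : ModuleCat.{u} R, σ.torsion T → ∀ K : Submodule R ↥T, σ.torsion (ModuleCat.of R ↥K)


private theorem torsion_of_surjective (σ : TorsionTheory R) {A B : Type u} [AddCommGroup A]
    [Module R A] [AddCommGroup B] [Module R B] (h : σ.torsion (ModuleCat.of R A))
    (g : A →ₗ[R] B) (hg : Function.Surjective g) : σ.torsion (ModuleCat.of R B) := by
  rw [σ.mem_torsion] at h ⊢
  intro F hF f
  have h0 : (f.comp g : A →ₗ[R] ↥F) = 0 := h F hF (f.comp g)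
  ext x
  obtain ⟨a, rfl⟩ := hg x
  exact congrFun (congrArg DFunLike.coe h0) a

private theorem torsion_of_equiv (σ : TorsionTheory R) {A B : Type u} [AddCommGroup A]
    [Module R A] [AddCommGroup B] [Module R B] (h : σ.torsion (ModuleCat.of R A))
    (e : A ≃ₗ[R] B) : σ.torsion (ModuleCat.of R B) :=
  torsion_of_surjective σ h e.toLinearMap e.surjective

/-- Properties of `σ`-cotorsion-free modules: (i) closure under quotients; (ii) closure under
extensions; (iii) closure under superfluous epimorphisms; (iv) when `σ` is hereditary,
closure under direct sums. -/
theorem cotorsionFree_closure_properties (σ : TorsionTheory R) :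
    (∀ (M : Type u) [AddCommGroup M] [Module R M], σ.CotorsionFree M →
      ∀ K : Submodule R M, σ.CotorsionFree (M ⧸ K)) ∧
    (∀ (M : Type u) [AddCommGroup M] [Module R M] (K : Submodule R M),
      σ.CotorsionFree ↥K → σ.CotorsionFree (M ⧸ K) → σ.CotorsionFree M) ∧
    (∀ (M N : Type u) [AddCommGroup M] [Module R M] [AddCommGroup N] [Module R N]
      (f : M →ₗ[R] N), Function.Surjective f →
      (∀ L : Submodule R M, LinearMap.ker f ⊔ L = ⊤ → L = ⊤) →
      σ.CotorsionFree N → σ.CotorsionFree M) ∧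
    (σ.IsHereditary →
      ∀ (ι : Type u) (M : ι → Type u) [∀ i, AddCommGroup (M i)] [∀ i, Module R (M i)],
        (∀ i, σ.CotorsionFree (M i)) → σ.CotorsionFree (⨁ i, M i)) := by
  -- a dense submodule maps to a dense submodule under any linear map
  have key : ∀ (A B : Type u) [AddCommGroup A] [Module R A] [AddCommGroup B] [Module R B]
      (g : A →ₗ[R] B), Function.Surjective g → ∀ L : Submodule R A, σ.IsDense L →
      σ.IsDense (L.map g) := by
    intro A B _ _ _ _ g hg L hL
    refine torsion_of_surjective σ hL (Submodule.mapQ L (L.map g) g (fun x hx =>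
      Submodule.mem_comap.2 (Submodule.mem_map_of_mem hx))) ?_
    intro y
    obtain ⟨n, rfl⟩ := Submodule.Quotient.mk_surjective _ y
    obtain ⟨m, rfl⟩ := hg n
    exact ⟨Submodule.Quotient.mk m, by simp [Submodule.mapQ_apply]⟩
  -- a dense submodule of a quotient pulls back to a dense submodule
  have pull : ∀ (A B : Type u) [AddCommGroup A] [Module R A] [AddCommGroup B] [Module R B]
      (g : A →ₗ[R] B), Function.Surjective g → ∀ L : Submodule R B, σ.IsDense L →
      σ.IsDense (L.comap g) := by
    intro A B _ _ _ _ g hg L hL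
    have hsurj : Function.Surjective (L.mkQ.comp g) :=
      (Submodule.Quotient.mk_surjective _).comp hg
    have e := LinearMap.quotKerEquivOfSurjective _ hsurj
    have hker : LinearMap.ker (L.mkQ.comp g) = L.comap g := by
      rw [LinearMap.ker_comp, Submodule.ker_mkQ]
    rw [hker] at e
    exact torsion_of_equiv σ hL e.symm
  refine ⟨?_, ?_, ?_, ?_⟩
  · -- (i) quotients
    intro M _ _ hM K L hL
    have h2 := pull M (M ⧸ K) K.mkQ (Submodule.Quotient.mk_surjective K) L hL
    have h3 : L.comap K.mkQ = ⊤ := hM _ h2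
    have := congrArg (Submodule.map K.mkQ) h3
    rwa [Submodule.map_comap_eq_of_surjective (Submodule.Quotient.mk_surjective K),
      Submodule.map_top, Submodule.range_mkQ] at this
  · -- (ii) extensions
    intro M _ _ K hK hQ L hL
    -- image of L in M/K is dense, hence ⊤, i.e. K ⊔ L = ⊤
    have h1 := key M (M ⧸ K) K.mkQ (Submodule.Quotient.mk_surjective K) L hL
    have h2 : L.map K.mkQ = ⊤ := hQ _ h1
    have h3 : L ⊔ K = ⊤ := by
      have := congrArg (Submodule.comap K.mkQ) h2
      rwa [Submodule.comap_map_eq, Submodule.ker_mkQ, Submodule.comap_top] at this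
    -- the map K → M/L is surjective
    have hsurj : Function.Surjective (L.mkQ.comp K.subtype) := by
      intro y
      obtain ⟨m, rfl⟩ := Submodule.Quotient.mk_surjective _ y
      have hm : m ∈ L ⊔ K := h3 ▸ Submodule.mem_top
      obtain ⟨l, hl, k, hk, rfl⟩ := Submodule.mem_sup.1 hm
      refine ⟨⟨k, hk⟩, ?_⟩
      simp only [LinearMap.comp_apply, Submodule.subtype_apply, Submodule.mkQ_apply]
      rw [show Submodule.Quotient.mk (l + k) = Submodule.Quotient.mk (p := L) k from ?_]
      exact (Submodule.Quotient.eq L).2 (by simpa using hl)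
    have e := LinearMap.quotKerEquivOfSurjective _ hsurj
    have hker : LinearMap.ker (L.mkQ.comp K.subtype) = L.comap K.subtype := by
      rw [LinearMap.ker_comp, Submodule.ker_mkQ]
    rw [hker] at e
    have h4 : L.comap K.subtype = ⊤ := hK _ (torsion_of_equiv σ hL e.symm)
    have h5 : K ≤ L := (Submodule.comap_subtype_eq_top).1 h4
    rw [sup_eq_left.2 h5] at h3
    exact h3
  · -- (iii) superfluous epimorphisms
    intro M N _ _ _ _ f hf hsmall hN L hL
    have h1 := key M N f hf L hL
    have h2 : L.map f = ⊤ := hN _ h1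
    have h3 : LinearMap.ker f ⊔ L = ⊤ := by
      have := congrArg (Submodule.comap f) h2
      rwa [Submodule.comap_map_eq, Submodule.comap_top, sup_comm] at this
    exact hsmall L h3
  · -- (iv) direct sums
    intro hHer ι M _ _ hM L hL
    classical
    have hcomp : ∀ i, ∀ x : M i, DirectSum.lof R ι M i x ∈ L := by
      intro i
      set φ : M i →ₗ[R] ((⨁ j, M j) ⧸ L) := L.mkQ.comp (DirectSum.lof R ι M i) with hφ
      have e := LinearMap.quotKerEquivRange φ
      have hr : σ.torsion (ModuleCat.of R ↥(LinearMap.range φ)) :=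
        hHer (ModuleCat.of R ((⨁ j, M j) ⧸ L)) hL (LinearMap.range φ)
      have hdense : σ.IsDense (LinearMap.ker φ) := torsion_of_equiv σ hr e.symm
      have htop : LinearMap.ker φ = ⊤ := hM i _ hdense
      intro x
      have : φ x = 0 := by
        have : x ∈ LinearMap.ker φ := htop ▸ Submodule.mem_top
        exact this
      simpa [hφ, Submodule.Quotient.mk_eq_zero] using this
    rw [eq_top_iff]
    rintro x -
    induction x using DirectSum.induction_on with
    | zero => exact L.zero_mem
    | of i m => exact hcomp i m
    | add x y hx hy => exact L.add_mem hx hy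
end

section
/- Let σ be a jansian torsion theory on left R-modules. Then every pure submodule of a σ-cotorsion-free module is σ-cotorsion-free. -/
universe u

variable {R : Type u} [Ring R]

/-- A torsion theory is jansian if its torsion class is closed under submodules and under
arbitrary direct products. -/
def TorsionTheory.IsJansian (σ : TorsionTheory R) : Prop :=
  (∀ T : ModuleCat.{u} R, σ.torsion T → ∀ K : Submodule R ↥T, σ.torsion (ModuleCat.of R ↥K)) ∧
  (∀ (ι : Type u) (T : ι → ModuleCat.{u} R), (∀ i, σ.torsion (T i)) →
    σ.torsion (ModuleCat.of R (∀ i, ↥(T i))))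

/-- A submodule `K ≤ M` is pure if for every finitely presented module `P`, the map
`Hom_R(P, M) → Hom_R(P, M/K)` induced by the canonical projection is surjective. -/
def IsPureSubmodule {M : Type u} [AddCommGroup M] [Module R M] (K : Submodule R M) : Prop :=
  ∀ (P : Type u) [AddCommGroup P] [Module R P], Module.FinitePresentation R P →
    ∀ g : P →ₗ[R] M ⧸ K, ∃ h : P →ₗ[R] M, K.mkQ ∘ₗ h = g

namespace TTAux

variable (σ : TorsionTheory R)

lemma torsion_of_equiv {X Y : Type u} [AddCommGroup X] [Module R X] [AddCommGroup Y] [Module R Y]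
    (e : X ≃ₗ[R] Y) (hY : σ.torsion (ModuleCat.of R Y)) : σ.torsion (ModuleCat.of R X) := by
  rw [σ.mem_torsion]
  intro F hF f
  have h0 := (σ.mem_torsion (ModuleCat.of R Y)).mp hY F hF (f ∘ₗ (e.symm.toLinearMap))
  have h1 : f ∘ₗ (e.symm.toLinearMap ∘ₗ e.toLinearMap) = 0 := by
    rw [← LinearMap.comp_assoc, h0, LinearMap.zero_comp]
  have h2 : e.symm.toLinearMap ∘ₗ e.toLinearMap = LinearMap.id := by
    ext x
    simp
  rwa [h2, LinearMap.comp_id] at h1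

lemma torsion_of_injective (hσ : σ.IsJansian) {X Y : Type u} [AddCommGroup X] [Module R X]
    [AddCommGroup Y] [Module R Y] (f : X →ₗ[R] Y) (hf : Function.Injective f)
    (hY : σ.torsion (ModuleCat.of R Y)) : σ.torsion (ModuleCat.of R X) := by
  have h1 : σ.torsion (ModuleCat.of R ↥(LinearMap.range f)) := hσ.1 (ModuleCat.of R Y) hY _
  exact torsion_of_equiv σ (LinearEquiv.ofInjective f hf) h1

def DI : Ideal R := sInf {J : Submodule R R | σ.IsDense J}

lemma dense_DI (hσ : σ.IsJansian) : σ.IsDense (DI σ) := by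
  let ι := {J : Submodule R R // σ.IsDense J}
  let T : ι → ModuleCat.{u} R := fun J => ModuleCat.of R (R ⧸ J.1)
  have hprod : σ.torsion (ModuleCat.of R (∀ J : ι, R ⧸ J.1)) := hσ.2 ι T fun J => J.2
  let φ₀ : R →ₗ[R] ∀ J : ι, R ⧸ J.1 := LinearMap.pi fun J => (J.1).mkQ
  have hker : DI σ ≤ LinearMap.ker φ₀ := by
    intro x hx
    simp only [LinearMap.mem_ker]
    funext J
    exact (Submodule.Quotient.mk_eq_zero J.1).mpr ((Submodule.mem_sInf.mp hx) J.1 J.2)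
  let φ : (R ⧸ DI σ) →ₗ[R] ∀ J : ι, R ⧸ J.1 := Submodule.liftQ _ φ₀ hker
  have hinj : Function.Injective φ := by
    intro p q hpq
    obtain ⟨x, rfl⟩ := Submodule.mkQ_surjective _ p
    obtain ⟨y, rfl⟩ := Submodule.mkQ_surjective _ q
    rw [Submodule.mkQ_apply, Submodule.mkQ_apply, Submodule.Quotient.eq]
    simp only [DI, Submodule.mem_sInf]
    intro J hJ
    have := congrFun hpq ⟨J, hJ⟩
    simp only [φ, Submodule.mkQ_apply, Submodule.liftQ_apply, φ₀, LinearMap.pi_apply,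
      Submodule.mkQ_apply] at this
    exact (Submodule.Quotient.eq J).mp this
  exact torsion_of_injective σ hσ φ hinj hprod

lemma smul_eq_zero_of_torsion (hσ : σ.IsJansian) {X : Type u} [AddCommGroup X] [Module R X]
    (hX : σ.torsion (ModuleCat.of R X)) {a : R} (ha : a ∈ DI σ) (x : X) : a • x = 0 := by
  let f := LinearMap.toSpanSingleton R X x
  have hdense : σ.IsDense (LinearMap.ker f) := by
    have h1 : σ.torsion (ModuleCat.of R ↥(LinearMap.range f)) := hσ.1 (ModuleCat.of R X) hX _
    exact torsion_of_equiv σ f.quotKerEquivRange h1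
  have hmem : a ∈ LinearMap.ker f := (Submodule.mem_sInf.mp ha) _ hdense
  simpa [f, LinearMap.toSpanSingleton_apply] using hmem

lemma torsion_of_smul_eq_zero (hσ : σ.IsJansian) {X : Type u} [AddCommGroup X] [Module R X]
    (hX : ∀ a ∈ DI σ, ∀ x : X, a • x = 0) : σ.torsion (ModuleCat.of R X) := by
  rw [σ.mem_torsion]
  intro F hF f
  ext x
  let g0 : R →ₗ[R] ↥F := LinearMap.toSpanSingleton R ↥F (f x)
  have hker : DI σ ≤ LinearMap.ker g0 := by
    intro a ha
    simp only [LinearMap.mem_ker, g0, LinearMap.toSpanSingleton_apply]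
    rw [← map_smul, hX a ha x, map_zero]
  let g : (R ⧸ DI σ) →ₗ[R] ↥F := Submodule.liftQ _ g0 hker
  have hg : g = 0 := (σ.mem_torsionFree F).mp hF (ModuleCat.of R (R ⧸ DI σ)) (dense_DI σ hσ) g
  have := LinearMap.congr_fun hg (Submodule.Quotient.mk 1)
  simpa [g, g0] using this

lemma exists_sum_of_mem_ideal_smul_top {I : Ideal R} {M : Type u} [AddCommGroup M] [Module R M]
    {x : M} (hx : x ∈ I • (⊤ : Submodule R M)) :
    ∃ (n : ℕ) (a : Fin n → R) (m : Fin n → M), (∀ j, a j ∈ I) ∧ x = ∑ j, a j • m j := by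
  refine Submodule.smul_induction_on hx ?_ ?_
  · intro r hr m _
    exact ⟨1, fun _ => r, fun _ => m, fun _ => hr, by simp⟩
  · rintro u w ⟨n, a, m, ha, rfl⟩ ⟨n', a', m', ha', rfl⟩
    refine ⟨n + n', Fin.append a a', Fin.append m m', ?_, ?_⟩
    · intro j
      refine Fin.addCases (fun i => ?_) (fun i => ?_) j
      · simpa [Fin.append_left] using ha i
      · simpa [Fin.append_right] using ha' i
    · rw [Fin.sum_univ_add]
      simp [Fin.append_left, Fin.append_right]

end TTAux


open TTAux in
/-- For a jansian torsion theory, every pure submodule of a `σ`-cotorsion-free module is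
`σ`-cotorsion-free. -/
theorem pure_submodule_cotorsionFree_of_jansian (σ : TorsionTheory R) (hσ : σ.IsJansian)
    (M : Type u) [AddCommGroup M] [Module R M] (hM : σ.CotorsionFree M)
    (K : Submodule R M) (hK : IsPureSubmodule K) :
    σ.CotorsionFree ↥K := by
  classical
  intro L hL
  have hMtop : (DI σ) • (⊤ : Submodule R M) = ⊤ := by
    apply hM
    apply torsion_of_smul_eq_zero σ hσ
    intro a ha x
    obtain ⟨m, rfl⟩ := Submodule.mkQ_surjective _ x
    rw [← map_smul, Submodule.mkQ_apply, Submodule.Quotient.mk_eq_zero]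
    exact Submodule.smul_mem_smul ha trivial
  have hann : ∀ a ∈ DI σ, ∀ k : ↥K, a • k ∈ L := by
    intro a ha k
    have h := smul_eq_zero_of_torsion σ hσ hL ha (Submodule.Quotient.mk k : ↥K ⧸ L)
    rwa [← Submodule.Quotient.mk_smul, Submodule.Quotient.mk_eq_zero] at h
  rw [eq_top_iff]
  rintro ⟨x, hx⟩ -
  have hxI : x ∈ DI σ • (⊤ : Submodule R M) := by rw [hMtop]; trivial
  obtain ⟨n, a, m, ha, hsum⟩ := exists_sum_of_mem_ideal_smul_top hxI
  let ψ : (Fin n → R) →ₗ[R] M ⧸ K := ∑ j, (LinearMap.proj j).smulRight (K.mkQ (m j))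
  have hψ : ∀ c : Fin n → R, ψ c = ∑ j, c j • K.mkQ (m j) := by
    intro c
    simp [ψ, LinearMap.sum_apply, LinearMap.smulRight_apply, LinearMap.proj_apply]
  have hψa : ψ a = 0 := by
    rw [hψ]
    have h1 : (∑ j, a j • K.mkQ (m j)) = K.mkQ (∑ j, a j • m j) := by
      rw [map_sum]
      simp
    rw [h1, ← hsum, Submodule.mkQ_apply, Submodule.Quotient.mk_eq_zero]
    exact hx
  let N : Submodule R (Fin n → R) := Submodule.span R {a}
  have hle : N ≤ LinearMap.ker ψ := by
    rw [Submodule.span_le, Set.singleton_subset_iff]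
    exact hψa
  let g : ((Fin n → R) ⧸ N) →ₗ[R] M ⧸ K := Submodule.liftQ N ψ hle
  have hfp : Module.FinitePresentation R ((Fin n → R) ⧸ N) :=
    Module.finitePresentation_of_surjective N.mkQ (Submodule.mkQ_surjective N)
      (by rw [Submodule.ker_mkQ]; exact Submodule.fg_span (Set.finite_singleton a))
  obtain ⟨h, hh⟩ := hK _ hfp g
  let e : Fin n → (Fin n → R) := fun j => Pi.single j 1
  let y : Fin n → M := fun j => m j - h (N.mkQ (e j))
  have hmkh : ∀ c, K.mkQ (h (N.mkQ c)) = ψ c := by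
    intro c
    have h2 := LinearMap.congr_fun hh (N.mkQ c)
    simpa [g, Submodule.liftQ_apply] using h2
  have hy : ∀ j, y j ∈ K := by
    intro j
    have h3 : K.mkQ (y j) = 0 := by
      simp only [y, map_sub, hmkh, hψ]
      simp [e, Pi.single_apply, ite_smul]
    rwa [Submodule.mkQ_apply, Submodule.Quotient.mk_eq_zero] at h3
  have hae : (∑ j, a j • e j) = a := by
    funext i
    simp [e, Pi.single_apply]
  have hxy : x = ∑ j, a j • y j := by
    have hsub : ∑ j, a j • y j = (∑ j, a j • m j) - h (N.mkQ (∑ j, a j • e j)) := by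
      simp only [y, smul_sub, Finset.sum_sub_distrib, map_sum, map_smul]
    rw [hsub, hae, show N.mkQ a = 0 from (Submodule.Quotient.mk_eq_zero N).mpr
      (Submodule.mem_span_singleton_self a), map_zero, sub_zero, hsum]
  have hfin : (⟨x, hx⟩ : ↥K) = ∑ j, a j • (⟨y j, hy j⟩ : ↥K) := by
    apply Subtype.ext
    simp [hxy]
  rw [hfin]
  exact Submodule.sum_mem L fun j _ => hann (a j) (ha j) _
end

section
/- Let A be an abelian category with arbitrary small coproducts and let (G_i)_{i ∈ I} be a family of projective objects of A such that every object of A admits an epimorphism from a coproduct of objects of the family. Let f : A → B and g : B → C be morphisms in A such that for every i ∈ I the induced sequence of abelian groups 0 → Hom(G_i, A) → Hom(G_i, B) → Hom(G_i, C) → 0 is exact (Hom(G_i, f) is injective, Hom(G_i, g) is surjective, and the image of Hom(G_i, f) equals the kernel of Hom(G_i, g)). Then 0 → A → B → C → 0 is a short exact sequence in A: f is a monomorphism, g is an epimorphism, and f is a kernel of g. -/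
open CategoryTheory CategoryTheory.Limits

universe w v u

/-- In an abelian category with coproducts and a family of projective objects `(G i)` such
that every object admits an epimorphism from a coproduct of members of the family, a pair of
composable morphisms `f : X ⟶ Y`, `g : Y ⟶ Z` such that for every `i` the induced sequence
`0 → Hom(G i, X) → Hom(G i, Y) → Hom(G i, Z) → 0` of abelian groups is exact forms a short
exact sequence: `f` is mono, `g` is epi and `f` is a kernel of `g`. -/
theorem shortExact_of_hom_exact {A : Type u} [Category.{v} A] [Abelian A]
    [HasCoproducts.{w} A] {I : Type w} (G : I → A)
    (hproj : ∀ i, Projective (G i))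
    (hgen : ∀ X : A, ∃ (J : Type w) (c : J → I) (e : (∐ fun j => G (c j)) ⟶ X), Epi e)
    {X Y Z : A} (f : X ⟶ Y) (g : Y ⟶ Z)
    (hinj : ∀ i, Function.Injective (fun h : G i ⟶ X => h ≫ f))
    (hsurj : ∀ i, Function.Surjective (fun h : G i ⟶ Y => h ≫ g))
    (hexact : ∀ (i : I) (h : G i ⟶ Y), h ≫ g = 0 ↔ ∃ k : G i ⟶ X, k ≫ f = h) :
    Mono f ∧ Epi g ∧
      ∃ hw : f ≫ g = 0, Nonempty (IsLimit (KernelFork.ofι f hw)) := by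
  -- f ≫ g = 0
  have hw : f ≫ g = 0 := by
    obtain ⟨J, c, e, he⟩ := hgen X
    rw [← cancel_epi e]
    apply Sigma.hom_ext
    intro j
    simp only [comp_zero]
    rw [← Category.assoc, ← Category.assoc]
    exact (hexact (c j) ((Sigma.ι (fun j => G (c j)) j ≫ e) ≫ f)).mpr ⟨Sigma.ι (fun j => G (c j)) j ≫ e, rfl⟩
  -- Mono f
  have hmono : Mono f := by
    apply Abelian.mono_of_kernel_ι_eq_zero
    obtain ⟨J, c, e, he⟩ := hgen (kernel f)
    rw [← cancel_epi e]
    apply Sigma.hom_ext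
    intro j
    simp only [comp_zero]
    rw [← Category.assoc]
    apply hinj (c j)
    simp [Category.assoc, kernel.condition]
  -- Epi g
  have hepi : Epi g := by
    apply Abelian.epi_of_cokernel_π_eq_zero
    obtain ⟨J, c, e, he⟩ := hgen Z
    rw [← cancel_epi e]
    apply Sigma.hom_ext
    intro j
    obtain ⟨h', hh'⟩ := hsurj (c j) (Sigma.ι (fun j => G (c j)) j ≫ e)
    simp only [comp_zero]
    rw [← Category.assoc, ← hh', Category.assoc, cokernel.condition, comp_zero]
  refine ⟨hmono, hepi, hw, ?_⟩
  -- the comparison map X ⟶ kernel g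
  set k : X ⟶ kernel g := kernel.lift g f hw with hk
  have hkι : k ≫ kernel.ι g = f := kernel.lift_ι g f hw
  have hkmono : Mono k := by
    constructor
    intro W a b hab
    rw [← cancel_mono f, ← hkι, ← Category.assoc, ← Category.assoc, hab]
  have hkepi : Epi k := by
    obtain ⟨J, c, e, he⟩ := hgen (kernel g)
    have : ∀ j : J, ∃ kj : G (c j) ⟶ X, kj ≫ k = Sigma.ι (fun j => G (c j)) j ≫ e := by
      intro j
      obtain ⟨kj, hkj⟩ := (hexact (c j) ((Sigma.ι (fun j => G (c j)) j ≫ e) ≫ kernel.ι g)).mp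
        (by rw [Category.assoc, kernel.condition, comp_zero])
      refine ⟨kj, ?_⟩
      rw [← cancel_mono (kernel.ι g), Category.assoc, hkι, hkj]
    choose kj hkj using this
    have : (Sigma.desc kj) ≫ k = e := by
      apply Sigma.hom_ext
      intro j
      rw [← Category.assoc, Sigma.ι_desc, hkj]
    exact epi_of_epi_fac this
  have : IsIso k := isIso_of_mono_of_epi k
  refine ⟨KernelFork.IsLimit.ofι f hw
    (fun {W} x hx => kernel.lift g x hx ≫ inv k) ?_ ?_⟩
  · intro W x hx
    rw [← hkι]
    simp
  · intro W x hx m hm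
    rw [← cancel_mono f, hm, ← hkι]
    simp
end

section
/- Let F be a flat left R-module and f : M → F an R-linear map. Then f is a flat reflection of M if and only if f is a flat preenvelope of M and F/(image of f) is τ-torsion. -/
universe u

/-- A module `T` is `τ`-torsion (for the torsion theory cogenerated by the flat modules) if
every `R`-linear map from `T` to a flat module is zero. -/
def TauTorsion (R : Type u) [CommRing R] (T : Type u) [AddCommGroup T] [Module R T] : Prop :=
  ∀ (F : Type u) [AddCommGroup F] [Module R F], Module.Flat R F → ∀ f : T →ₗ[R] F, f = 0

variable {R : Type u} [CommRing R]

/-- An `R`-linear map `f : M → F` with `F` flat is a flat preenvelope if every `R`-linear map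
from `M` to a flat module factors through `f`. -/
def IsFlatPreenvelope {M F : Type u} [AddCommGroup M] [Module R M] [AddCommGroup F]
    [Module R F] (f : M →ₗ[R] F) : Prop :=
  Module.Flat R F ∧
    ∀ (G : Type u) [AddCommGroup G] [Module R G], Module.Flat R G →
      ∀ g : M →ₗ[R] G, ∃ h : F →ₗ[R] G, h ∘ₗ f = g

/-- An `R`-linear map `f : M → F` with `F` flat is a flat reflection if for every flat module
`G` the map `Hom_R(F, G) → Hom_R(M, G)`, `h ↦ h ∘ f`, is bijective. -/
def IsFlatReflection {M F : Type u} [AddCommGroup M] [Module R M] [AddCommGroup F]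
    [Module R F] (f : M →ₗ[R] F) : Prop :=
  Module.Flat R F ∧
    ∀ (G : Type u) [AddCommGroup G] [Module R G], Module.Flat R G →
      Function.Bijective fun h : F →ₗ[R] G => h ∘ₗ f

/-- Let `F` be flat and `f : M → F` linear.  Then `f` is a flat reflection of `M` iff `f` is
a flat preenvelope of `M` and `F/im f` is `τ`-torsion. -/
theorem flatReflection_iff_preenvelope_and_torsion_cokernel
    (M F : Type u) [AddCommGroup M] [Module R M] [AddCommGroup F] [Module R F]
    [Module.Flat R F] (f : M →ₗ[R] F) :
    IsFlatReflection f ↔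
      IsFlatPreenvelope f ∧ TauTorsion R (F ⧸ LinearMap.range f) := by
  constructor
  · rintro ⟨hF, hbij⟩
    refine ⟨⟨hF, fun G _ _ hG g => ?_⟩, fun G _ _ hG g => ?_⟩
    · obtain ⟨h, hh⟩ := (hbij G hG).2 g
      exact ⟨h, hh⟩
    · -- g : F ⧸ range f → G, show g = 0
      have h1 : (g ∘ₗ (LinearMap.range f).mkQ) ∘ₗ f = (0 : F →ₗ[R] G) ∘ₗ f := by
        ext m
        have : (LinearMap.range f).mkQ (f m) = 0 :=
          (Submodule.Quotient.mk_eq_zero _).mpr (LinearMap.mem_range_self f m)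
        simp only [LinearMap.comp_apply, LinearMap.zero_apply]
        rw [Submodule.mkQ_apply] at this ⊢
        rw [this, map_zero]
      have := (hbij G hG).1 h1
      ext x
      exact congrArg (fun (k : F →ₗ[R] G) => k x) this
  · rintro ⟨⟨hF, hpre⟩, htor⟩
    refine ⟨hF, fun G _ _ hG => ⟨fun h₁ h₂ heq => ?_, fun g => ?_⟩⟩
    · -- injectivity
      have hz : ∀ m, (h₁ - h₂) (f m) = 0 := fun m => by
        have := congrArg (fun (k : M →ₗ[R] G) => k m) heq
        simpa [sub_eq_zero] using this
      have hrange : LinearMap.range f ≤ LinearMap.ker (h₁ - h₂) := by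
        rintro x ⟨m, rfl⟩; exact hz m
      set q := (LinearMap.range f).liftQ (h₁ - h₂) hrange with hq
      have hq0 : q = 0 := htor G hG q
      have : h₁ - h₂ = 0 := by
        ext x
        have := congrArg (fun (k : (F ⧸ LinearMap.range f) →ₗ[R] G) =>
          k ((LinearMap.range f).mkQ x)) hq0
        simpa [q] using this
      exact sub_eq_zero.mp this
    · obtain ⟨h, hh⟩ := hpre G hG g
      exact ⟨h, hh⟩
end

section
/- Let R be a domain (a nonzero ring with no nonzero zero divisors). Then: (1) every essential submodule K of a left R-module M (i.e. K ∩ L ≠ 0 for every nonzero submodule L of M) is τ-dense in M; (2) if moreover R is not a division ring, then every nonzero flat left R-module contains a proper τ-dense submodule; equivalently, the zero module is the only τ-cotorsion-free flat left R-module. -/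
universe u

section Aux

variable {R : Type u} [CommRing R] [IsDomain R]

/-- Flat modules over a domain are torsion-free. -/
lemma flat_torsion_free {F : Type u} [AddCommGroup F] [Module R F]
    (hF : Module.Flat R F) {r : R} (hr : r ≠ 0) {x : F} (hx : r • x = 0) : x = 0 := by
  have hg : Function.Injective (LinearMap.lsmul R R r) := by
    intro a b h
    simp only [LinearMap.lsmul_apply, smul_eq_mul] at h
    exact mul_left_cancel₀ hr h
  have hinj := Module.Flat.lTensor_preserves_injective_linearMap (M := F)
    (LinearMap.lsmul R R r) hg
  have h1 : (LinearMap.lsmul R R r).lTensor F (x ⊗ₜ[R] (1 : R)) = x ⊗ₜ[R] r := by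
    simp [LinearMap.lTensor_tmul]
  have h2 : (x ⊗ₜ[R] r : TensorProduct R F R) = 0 := by
    have := congrArg (TensorProduct.rid R F).symm (hx)
    have h3 : (TensorProduct.rid R F).symm (r • x) = x ⊗ₜ[R] r := by
      rw [map_smul]
      simp [TensorProduct.rid_symm_apply, TensorProduct.smul_tmul']
      rw [TensorProduct.smul_tmul]
      simp
    rw [h3] at this
    simpa using this
  have h4 : (LinearMap.lsmul R R r).lTensor F (x ⊗ₜ[R] (1 : R)) =
      (LinearMap.lsmul R R r).lTensor F 0 := by
    rw [h1, h2, map_zero]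
  have h5 : (x ⊗ₜ[R] (1 : R) : TensorProduct R F R) = 0 := hinj h4
  have := congrArg (TensorProduct.rid R F) h5
  simpa using this

/-- A classically torsion module is `τ`-torsion. -/
lemma tauTorsion_of_torsion {T : Type u} [AddCommGroup T] [Module R T]
    (h : ∀ t : T, ∃ r : R, r ≠ 0 ∧ r • t = 0) : TauTorsion R T := by
  intro F _ _ hF f
  ext t
  obtain ⟨r, hr, h0⟩ := h t
  have : r • f t = 0 := by rw [← map_smul, h0, map_zero]
  simpa using flat_torsion_free hF hr this

end Aux

/-- Let `R` be a domain.  Then (1) every essential submodule of a module `M` is `τ`-dense in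
`M`; (2) if moreover `R` is not a division ring (there is a nonzero non-invertible element),
then every nonzero flat module contains a proper `τ`-dense submodule. -/
theorem essential_dense_and_no_flat_objects_over_domain (R : Type u) [CommRing R]
    [IsDomain R] :
    (∀ (M : Type u) [AddCommGroup M] [Module R M] (K : Submodule R M),
      (∀ L : Submodule R M, K ⊓ L = ⊥ → L = ⊥) → TauTorsion R (M ⧸ K)) ∧
    ((∃ r : R, r ≠ 0 ∧ ¬IsUnit r) →
      ∀ (F : Type u) [AddCommGroup F] [Module R F], Module.Flat R F →
        (∃ x : F, x ≠ 0) →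
        ∃ K : Submodule R F, K ≠ ⊤ ∧ TauTorsion R (F ⧸ K)) := by
  constructor
  · -- Part 1: essential submodules are τ-dense
    intro M _ _ K hK
    apply tauTorsion_of_torsion
    intro t
    obtain ⟨m, rfl⟩ := Submodule.Quotient.mk_surjective K t
    by_cases hm : K ⊓ Submodule.span R {m} = ⊥
    · have := hK _ hm
      have hm0 : m = 0 := by
        have : m ∈ (⊥ : Submodule R M) := this ▸ Submodule.mem_span_singleton_self m
        simpa using this
      exact ⟨1, one_ne_zero, by simp [hm0]⟩
    · obtain ⟨y, hy, hy0⟩ := Submodule.exists_mem_ne_zero_of_ne_bot hm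
      obtain ⟨hyK, hyspan⟩ := Submodule.mem_inf.mp hy
      obtain ⟨r, rfl⟩ := Submodule.mem_span_singleton.mp hyspan
      refine ⟨r, ?_, ?_⟩
      · rintro rfl; simp at hy0
      · rw [← Submodule.Quotient.mk_smul, Submodule.Quotient.mk_eq_zero]
        exact hyK
  · -- Part 2
    rintro ⟨r, hr0, hru⟩ F _ _ hF ⟨x, hx⟩
    -- find a submodule maximal with respect to trivial intersection with span {x}
    set S : Set (Submodule R F) := {K | K ⊓ Submodule.span R {x} = ⊥} with hS
    obtain ⟨C, hCmax⟩ : ∃ C, Maximal (· ∈ S) C := by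
      apply zorn_le₀
      intro c hc hchain
      rcases Set.eq_empty_or_nonempty c with rfl | hne
      · exact ⟨⊥, by simp [hS], by simp⟩
      · refine ⟨sSup c, ?_, fun z hz => le_sSup hz⟩
        rw [hS, Set.mem_setOf_eq, eq_bot_iff]
        intro y hy
        obtain ⟨hy1, hy2⟩ := Submodule.mem_inf.mp hy
        obtain ⟨K, hKc, hyK⟩ := (Submodule.mem_sSup_of_directed hne
          (hchain.directedOn)).mp hy1
        have : y ∈ K ⊓ Submodule.span R {x} := Submodule.mem_inf.mpr ⟨hyK, hy2⟩
        rw [hc hKc] at this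
        exact this
    have hC : C ⊓ Submodule.span R {x} = ⊥ := hCmax.prop
    refine ⟨C ⊔ Submodule.span R {r • x}, ?_, ?_⟩
    · -- properness
      intro htop
      have hxmem : x ∈ C ⊔ Submodule.span R {r • x} := htop ▸ Submodule.mem_top
      obtain ⟨c, hc, w, hw, hcw⟩ := Submodule.mem_sup.mp hxmem
      obtain ⟨s, rfl⟩ := Submodule.mem_span_singleton.mp hw
      have key : (1 - s * r) • x ∈ C ⊓ Submodule.span R {x} := by
        refine Submodule.mem_inf.mpr ⟨?_, ?_⟩
        · have : (1 - s * r) • x = c := by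
            rw [sub_smul, one_smul, mul_smul, eq_sub_of_add_eq hcw]
          rw [this]; exact hc
        · exact Submodule.mem_span_singleton.mpr ⟨_, rfl⟩
      rw [hC] at key
      have h1 : (1 - s * r) • x = 0 := key
      have : (1 : R) - s * r = 0 := by
        by_contra hne
        exact hx (flat_torsion_free hF hne h1)
      have : s * r = 1 := by linear_combination -this
      exact hru (IsUnit.of_mul_eq_one (a := r) s (by rw [mul_comm]; exact this))
    · -- τ-torsion of the quotient
      apply tauTorsion_of_torsion
      intro t
      obtain ⟨y, rfl⟩ := Submodule.Quotient.mk_surjective _ t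
      -- find s ≠ 0 with s • y ∈ C ⊔ span {x}
      have key : ∃ s : R, s ≠ 0 ∧ s • y ∈ C ⊔ Submodule.span R {x} := by
        by_cases hy : (C ⊔ Submodule.span R {y}) ⊓ Submodule.span R {x} = ⊥
        · have hCy : C ⊔ Submodule.span R {y} = C :=
            le_antisymm (hCmax.le_of_ge hy le_sup_left) le_sup_left
          refine ⟨1, one_ne_zero, ?_⟩
          rw [one_smul]
          have : y ∈ C := hCy ▸ Submodule.mem_sup_right (Submodule.mem_span_singleton_self y)
          exact Submodule.mem_sup_left this
        · obtain ⟨z, hz, hz0⟩ := Submodule.exists_mem_ne_zero_of_ne_bot hy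
          obtain ⟨hz1, hz2⟩ := Submodule.mem_inf.mp hz
          obtain ⟨c, hc, w, hw, hcw⟩ := Submodule.mem_sup.mp hz1
          obtain ⟨s, rfl⟩ := Submodule.mem_span_singleton.mp hw
          refine ⟨s, ?_, ?_⟩
          · rintro rfl
            rw [zero_smul, add_zero] at hcw
            have : z ∈ C ⊓ Submodule.span R {x} :=
              Submodule.mem_inf.mpr ⟨hcw ▸ hc, hz2⟩
            rw [hC] at this
            exact hz0 this
          · have : s • y = z - c := eq_sub_of_add_eq' hcw
            rw [this]
            exact Submodule.sub_mem _ (Submodule.mem_sup_right hz2)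
              (Submodule.mem_sup_left hc)
      obtain ⟨s, hs0, hsy⟩ := key
      refine ⟨r * s, mul_ne_zero hr0 hs0, ?_⟩
      rw [← Submodule.Quotient.mk_smul, Submodule.Quotient.mk_eq_zero]
      -- r • (s • y) ∈ C ⊔ span {r • x}
      obtain ⟨c, hc, w, hw, hcw⟩ := Submodule.mem_sup.mp hsy
      obtain ⟨a, rfl⟩ := Submodule.mem_span_singleton.mp hw
      have : (r * s) • y = r • c + a • (r • x) := by
        rw [mul_smul, ← hcw, smul_add, smul_comm r a x]
      rw [this]
      exact Submodule.add_mem _ (Submodule.mem_sup_left (Submodule.smul_mem _ _ hc))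
        (Submodule.mem_sup_right (Submodule.mem_span_singleton.mpr ⟨a, rfl⟩))
end
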